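/- Let BP denote the Boolean-to-c-free Bercovici-Pata bijection on pairs of compactly supported distributions, characterized by R_{BP(ν)} = B_ν and ᶜR_{BP(μ,ν)} = B_μ. Then for pairs with second coordinates of nonzero mean, ᶜT_{BP(μ,ν)}(z) = ᶜT_{(μ,ν)}(z/(1-z)) for z in a neighborhood of 0. -/

import Mathlib

open MeasureTheory

/-- `M_σ(z) = ∫ (1-tz)⁻¹ dσ(t)`. -/
noncomputable def momGen (σ : Measure ℝ) (z : ℂ) : ℂ :=
  ∫ t : ℝ, ((1 : ℂ) - (t : ℂ) * z)⁻¹ ∂σ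

/-- `M̃_σ = M_σ - 1`. -/
noncomputable def momGenT (σ : Measure ℝ) (z : ℂ) : ℂ := momGen σ z - 1

/-- Boolean transform `B_σ(z) = 1 - M_σ(z)⁻¹` (i.e. `M_σ - 1 = B_σ·M_σ`). -/
noncomputable def boolT (σ : Measure ℝ) (z : ℂ) : ℂ := 1 - (momGen σ z)⁻¹

/-- `R`, `Rinv`, `cR` are the free R-transform of `ν` (with its local compositional inverse)
and the c-free R-transform of the pair `(μ,ν)`, as analytic germs at `0`. -/
def TransformData (μ ν : Measure ℝ) (R Rinv cR : ℂ → ℂ) : Prop :=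
  ∃ δ : ℝ, 0 < δ ∧ ∀ z : ℂ, ‖z‖ < δ →
    momGenT ν z = R (z + z * momGenT ν z) ∧
    Rinv (R z) = z ∧ R (Rinv z) = z ∧
    (momGen μ z - 1) * momGen ν z = momGen μ z * cR (z * momGen ν z)

/-! Since `B_ν'(0)` is the mean of `ν`, the Boolean transform `B_ν` is locally invertible at `0`,
so every small `z` is `B_ν(u)` for a small `u`. Then `R_{ν'} = B_ν` gives `R_{ν'}⁻¹(z) = u` and
`ᶜR_{μ',ν'}(u) = B_μ(u)`. On the other side `z/(1-z) = M̃_ν(u) = R_ν(u M_ν(u))`, and the defining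
relation of `ᶜR_{μ,ν}` says `ᶜR_{μ,ν}(u M_ν(u)) = B_μ(u) M_ν(u)`. Both T-transforms equal `B_μ(u)/u`. -/

open Topology Filter

section MomentGeneratingFunction

variable {σ : Measure ℝ}

lemma exists_pos_ae_abs_le_of_measure_compl_Icc {R : ℝ} (h : σ (Set.Icc (-R) R)ᶜ = 0) :
    ∃ C, 0 < C ∧ ∀ᵐ t ∂σ, |t| ≤ C :=
  ⟨max R 1, by positivity, by
    filter_upwards [mem_ae_iff.2 h] with t ht using abs_le.2 ht |>.trans (le_max_left R 1)⟩

lemma half_le_norm_one_sub_mul {C t : ℝ} {x : ℂ} (hC : 0 < C) (ht : |t| ≤ C)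
    (hx : x ∈ Metric.ball (0 : ℂ) (2 * C)⁻¹) : 1 / 2 ≤ ‖1 - (t : ℂ) * x‖ := by
  have htx : ‖(t : ℂ) * x‖ ≤ 1 / 2 := by
    rw [mem_ball_zero_iff] at hx
    rw [norm_mul, Complex.norm_real, Real.norm_eq_abs]
    calc |t| * ‖x‖ ≤ C * (2 * C)⁻¹ := by gcongr
      _ = 1 / 2 := by field_simp
  linarith [norm_sub_norm_le (1 : ℂ) ((t : ℂ) * x), norm_one (α := ℂ)]

lemma norm_inv_one_sub_mul_le_two {C t : ℝ} {x : ℂ} (hC : 0 < C) (ht : |t| ≤ C)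
    (hx : x ∈ Metric.ball (0 : ℂ) (2 * C)⁻¹) : ‖(1 - (t : ℂ) * x)⁻¹‖ ≤ 2 := by
  rw [norm_inv]
  simpa using inv_anti₀ (by norm_num) (half_le_norm_one_sub_mul hC ht hx)

variable [IsFiniteMeasure σ] {C : ℝ}

lemma hasDerivAt_momGen (hC : 0 < C) (hσ : ∀ᵐ t ∂σ, |t| ≤ C) {x : ℂ}
    (hx : x ∈ Metric.ball (0 : ℂ) (2 * C)⁻¹) :
    HasDerivAt (momGen σ) (∫ t : ℝ, (t : ℂ) * ((1 - (t : ℂ) * x)⁻¹) ^ 2 ∂σ) x := by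
  have hmeas : ∀ y : ℂ, AEStronglyMeasurable (fun t : ℝ => (1 - (t : ℂ) * y)⁻¹) σ :=
    fun y => (((Complex.measurable_ofReal.mul_const y).const_sub 1).inv).aestronglyMeasurable
  refine (hasDerivAt_integral_of_dominated_loc_of_deriv_le
    (F' := fun y t => (t : ℂ) * ((1 - (t : ℂ) * y)⁻¹) ^ 2) (bound := fun _ => 4 * C)
    (Metric.isOpen_ball.mem_nhds hx) (.of_forall hmeas) ?_ ?_ ?_ (integrable_const _) ?_).2
  · refine Integrable.mono' (integrable_const 2) (hmeas x) ?_
    filter_upwards [hσ] with t ht using norm_inv_one_sub_mul_le_two hC ht hx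
  · exact (Complex.measurable_ofReal.mul
      (((Complex.measurable_ofReal.mul_const x).const_sub 1).inv.pow_const 2)).aestronglyMeasurable
  · filter_upwards [hσ] with t ht y hy
    rw [norm_mul, norm_pow, Complex.norm_real, Real.norm_eq_abs]
    have := norm_inv_one_sub_mul_le_two hC ht hy
    calc |t| * ‖(1 - (t : ℂ) * y)⁻¹‖ ^ 2 ≤ C * 2 ^ 2 := by gcongr
      _ = 4 * C := by ring
  · filter_upwards [hσ] with t ht y hy
    have hne : 1 - (t : ℂ) * y ≠ 0 := fun h0 => by
      have := half_le_norm_one_sub_mul hC ht hy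
      rw [h0, norm_zero] at this
      norm_num at this
    simpa only [neg_neg, mul_one, div_eq_mul_inv, inv_pow] using
      (((hasDerivAt_id' y).const_mul (t : ℂ)).const_sub 1).fun_inv hne

lemma hasStrictDerivAt_momGen_zero (hC : 0 < C) (hσ : ∀ᵐ t ∂σ, |t| ≤ C) :
    HasStrictDerivAt (momGen σ) ((∫ t, t ∂σ : ℝ) : ℂ) 0 := by
  have h0 : (0 : ℂ) ∈ Metric.ball (0 : ℂ) (2 * C)⁻¹ := Metric.mem_ball_self (by positivity)
  have hd : DifferentiableOn ℂ (momGen σ) (Metric.ball 0 (2 * C)⁻¹) :=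
    fun x hx => (hasDerivAt_momGen hC hσ hx).differentiableAt.differentiableWithinAt
  have hderiv := hasDerivAt_momGen hC hσ h0
  simp only [mul_zero, sub_zero, inv_one, one_pow, mul_one] at hderiv
  exact ((hd.analyticAt (Metric.isOpen_ball.mem_nhds h0)).contDiffAt (n := 1)).hasStrictDerivAt'
    (hderiv.congr_deriv integral_complex_ofReal) one_ne_zero

end MomentGeneratingFunction

section BooleanTransform

variable {σ : Measure ℝ} [IsProbabilityMeasure σ] {C : ℝ}

lemma momGen_zero : momGen σ 0 = 1 := by
  simp [momGen]

lemma map_boolT_nhds_zero (hC : 0 < C) (hσ : ∀ᵐ t ∂σ, |t| ≤ C) (hmean : ∫ t, t ∂σ ≠ 0) :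
    map (boolT σ) (𝓝 0) = 𝓝 0 := by
  have hM := hasStrictDerivAt_momGen_zero hC hσ
  have hinv := hasStrictDerivAt_inv (x := momGen σ 0) (by simp [momGen_zero])
  have hB : HasStrictDerivAt (fun z => 1 - (momGen σ z)⁻¹) ((∫ t, t ∂σ : ℝ) : ℂ) 0 := by
    simpa [momGen_zero, Function.comp_def] using (hinv.comp 0 hM).const_sub 1
  exact (hB.map_nhds_eq (by exact_mod_cast hmean)).trans (by simp [momGen_zero])

end BooleanTransform

lemma boolT_div_one_sub_boolT {σ : Measure ℝ} {z : ℂ} (h : momGen σ z ≠ 0) :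
    boolT σ z / (1 - boolT σ z) = momGenT σ z := by
  simp only [boolT, momGenT, sub_sub_cancel]
  field_simp

lemma cR_mul_momGen_eq_boolT_mul_momGen {μ ν : Measure ℝ} {cR : ℂ → ℂ} {z : ℂ}
    (hν : momGen ν z ≠ 0)
    (h : (momGen μ z - 1) * momGen ν z = momGen μ z * cR (z * momGen ν z)) :
    cR (z * momGen ν z) = boolT μ z * momGen ν z := by
  have hμ : momGen μ z ≠ 0 := fun h0 => hν (by simpa [h0] using h)
  simp only [boolT]
  field_simp
  linear_combination -h

lemma add_mul_momGenT (σ : Measure ℝ) (z : ℂ) : z + z * momGenT σ z = z * momGen σ z := by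
  simp only [momGenT]
  ring

lemma TransformData.eventually {μ ν : Measure ℝ} {R Rinv cR : ℂ → ℂ}
    (h : TransformData μ ν R Rinv cR) :
    ∀ᶠ z in 𝓝 (0 : ℂ), momGenT ν z = R (z + z * momGenT ν z) ∧
      Rinv (R z) = z ∧ R (Rinv z) = z ∧
      (momGen μ z - 1) * momGen ν z = momGen μ z * cR (z * momGen ν z) :=
  NormedAddGroup.nhds_zero_basis_norm_lt.eventually_iff.2 h

theorem cfree_BP_T_transform_general (μ ν μ' ν' : Measure ℝ)
    [IsProbabilityMeasure ν]
    (hνsupp : ∃ R : ℝ, ν (Set.Icc (-R) R)ᶜ = 0)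
    (hmean : (∫ t : ℝ, t ∂ν) ≠ 0)
    (R Rinv cR R' R'inv cR' : ℂ → ℂ)
    (hT : TransformData μ ν R Rinv cR)
    (hT' : TransformData μ' ν' R' R'inv cR')
    (hBP : ∃ δ : ℝ, 0 < δ ∧ ∀ z : ℂ, ‖z‖ < δ → cR' z = boolT μ z ∧ R' z = boolT ν z) :
    ∃ ε : ℝ, 0 < ε ∧ ∀ z : ℂ, ‖z‖ < ε →
      cR' (R'inv z) / R'inv z = cR (Rinv (z / (1 - z))) / Rinv (z / (1 - z)) := by
  obtain ⟨Rν, hRν⟩ := hνsupp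
  obtain ⟨C, hC, hν⟩ := exists_pos_ae_abs_le_of_measure_compl_Icc hRν
  have hM := (hasStrictDerivAt_momGen_zero hC hν).hasDerivAt.continuousAt
  have hMne : ∀ᶠ u in 𝓝 (0 : ℂ), momGen ν u ≠ 0 := hM.eventually_ne (by simp [momGen_zero])
  have huM : Tendsto (fun u => u * momGen ν u) (𝓝 0) (𝓝 0) := by
    simpa using tendsto_id.mul hM.tendsto
  have hgood : ∀ᶠ u in 𝓝 (0 : ℂ), momGen ν u ≠ 0 ∧ Rinv (momGenT ν u) = u * momGen ν u ∧
      (momGen μ u - 1) * momGen ν u = momGen μ u * cR (u * momGen ν u) ∧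
      R'inv (boolT ν u) = u ∧ cR' u = boolT μ u := by
    filter_upwards [hMne, hT.eventually, huM.eventually (hT.eventually.mono fun _ h => h.2.1),
      hT'.eventually, NormedAddGroup.nhds_zero_basis_norm_lt.eventually_iff.2 hBP]
      with u hMu hu hv hu' hBPu
    exact ⟨hMu, by rw [hu.1, add_mul_momGenT, hv], hu.2.2.2, hBPu.2 ▸ hu'.2.1, hBPu.1⟩
  have hsurj := image_mem_map (m := boolT ν) hgood
  rw [map_boolT_nhds_zero hC hν hmean] at hsurj
  obtain ⟨ε, hε, hball⟩ := NormedAddGroup.nhds_zero_basis_norm_lt.mem_iff.1 hsurj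
  refine ⟨ε, hε, fun z hz => ?_⟩
  obtain ⟨u, ⟨hMu, hRinv, hcRu, hR'inv, hcR'u⟩, rfl⟩ := hball hz
  rw [hR'inv, hcR'u, boolT_div_one_sub_boolT hMu, hRinv,
    cR_mul_momGen_eq_boolT_mul_momGen hMu hcRu, mul_div_mul_right _ _ hMu]

/-- If `(μ',ν') = BP(μ,ν)` is the Boolean-to-c-free Bercovici–Pata image of `(μ,ν)`, i.e.
`ᶜR_{μ',ν'} = B_μ` and `R_{ν'} = B_ν` as germs at `0`, then the c-free T-transforms satisfy
`ᶜT_{BP(μ,ν)}(z) = ᶜT_{(μ,ν)}(z/(1-z))` near `0`. -/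
theorem cfree_BP_T_transform (μ ν μ' ν' : Measure ℝ)
    [IsProbabilityMeasure μ] [IsProbabilityMeasure ν]
    [IsProbabilityMeasure μ'] [IsProbabilityMeasure ν']
    (hμsupp : ∃ R : ℝ, μ (Set.Icc (-R) R)ᶜ = 0)
    (hνsupp : ∃ R : ℝ, ν (Set.Icc (-R) R)ᶜ = 0)
    (hμ'supp : ∃ R : ℝ, μ' (Set.Icc (-R) R)ᶜ = 0)
    (hν'supp : ∃ R : ℝ, ν' (Set.Icc (-R) R)ᶜ = 0)
    (hmean : (∫ t : ℝ, t ∂ν) ≠ 0) (hmean' : (∫ t : ℝ, t ∂ν') ≠ 0)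
    (R Rinv cR R' R'inv cR' : ℂ → ℂ)
    (hT : TransformData μ ν R Rinv cR)
    (hT' : TransformData μ' ν' R' R'inv cR')
    (hBP : ∃ δ : ℝ, 0 < δ ∧ ∀ z : ℂ, ‖z‖ < δ → cR' z = boolT μ z ∧ R' z = boolT ν z) :
    ∃ ε : ℝ, 0 < ε ∧ ∀ z : ℂ, ‖z‖ < ε →
      cR' (R'inv z) / R'inv z = cR (Rinv (z / (1 - z))) / Rinv (z / (1 - z)) :=
  cfree_BP_T_transform_general μ ν μ' ν' hνsupp hmean R Rinv cR R' R'inv cR' hT hT' hBP
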